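/- (Radial eigenfunctions from the ODE.) Let n ≥ 2, p > 1, λ > 0 and R > 0. Let z : ℝ → ℝ be C¹ on [0,R] with z > 0 on [0,R), z(R) = 0 and z'(0) = 0, and suppose that the function w(t) := t^{n−1} |z'(t)|^{p−2} z'(t) is differentiable on (0,R) with w'(t) = −λ t^{n−1} z(t)^{p−1} for every t ∈ (0,R). Then the radial function v(x) := z(‖x‖) is a weak solution of Δ_p v + λ v^{p−1} = 0 on the Euclidean ball B(0,R), is positive on B(0,R), and extends continuously to the closed ball with value 0 on the boundary sphere; in particular R is an eigen-radius for λ. -/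

import Mathlib

open Metric Set MeasureTheory
noncomputable section

/-- Euclidean `n`-space. -/
abbrev Euc (n : ℕ) := EuclideanSpace ℝ (Fin n)

/-- `u` is a weak solution of `Δ_p u + f (u) = 0` on `Ω ⊆ ℝⁿ`:
`u` is `C¹` on `Ω` and the weak formulation holds against all smooth test functions
compactly supported in `Ω`.  (When `∇u x = 0` the integrand on the left-hand side
vanishes automatically, since the inner product factor is `0`.) -/
def IsWeakSolution (n : ℕ) (p : ℝ) (Ω : Set (Euc n)) (f : ℝ → ℝ) (u : Euc n → ℝ) : Prop :=
  ContDiffOn ℝ 1 u Ω ∧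
  ∀ φ : Euc n → ℝ, ContDiff ℝ (⊤ : ℕ∞) φ → HasCompactSupport φ → tsupport φ ⊆ Ω →
    ∫ x in Ω, ‖gradient u x‖ ^ (p - 2) * (inner ℝ (gradient u x) (gradient φ x) : ℝ)
      = ∫ x in Ω, f (u x) * φ x

/-- `R > 0` is an eigen-radius for `lam`: the ball of radius `R` carries a positive
weak solution of `Δ_p v + lam·v^(p-1) = 0` vanishing continuously on the boundary sphere. -/
def IsEigenRadius (n : ℕ) (p lam R : ℝ) : Prop :=
  0 < R ∧ ∃ v : Euc n → ℝ,
    IsWeakSolution n p (ball 0 R) (fun t => lam * t ^ (p - 1)) v ∧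
    (∀ x ∈ ball (0 : Euc n) R, 0 < v x) ∧
    ContinuousOn v (closedBall 0 R) ∧
    ∀ x ∈ sphere (0 : Euc n) R, v x = 0

/-- `Ω` is a `C²` domain with defining function `Φ`. -/
structure IsC2Domain {n : ℕ} (Ω : Set (Euc n)) (Φ : Euc n → ℝ) : Prop where
  isOpen : IsOpen Ω
  isConnected : IsConnected Ω
  smooth : ContDiff ℝ 2 Φ
  eq_sublevel : Ω = {x | Φ x < 0}
  frontier_eq : frontier Ω = {x | Φ x = 0}
  grad_ne_zero : ∀ x ∈ frontier Ω, gradient Φ x ≠ 0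

/-- `Ω` is an `f`-extremal domain for the `p`-Laplacian, with `C²` defining function `Φ`:
there is a positive weak solution of `Δ_p u + f (u) = 0` on `Ω`, extending continuously by
`0` to the boundary, whose gradient extends continuously to `closure Ω` with constant
normal derivative `⟨∇u, ν⟩ = c` along `frontier Ω`. -/
def IsExtremalDomain (n : ℕ) (p : ℝ) (f : ℝ → ℝ) (Ω : Set (Euc n)) (Φ : Euc n → ℝ) : Prop :=
  IsC2Domain Ω Φ ∧ (∃ K, LipschitzOnWith K f (Ici 0)) ∧
  ∃ (u : Euc n → ℝ) (G : Euc n → Euc n) (c : ℝ),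
    IsWeakSolution n p Ω f u ∧ (∀ x ∈ Ω, 0 < u x) ∧
    ContinuousOn u (closure Ω) ∧ (∀ x ∈ frontier Ω, u x = 0) ∧
    ContinuousOn G (closure Ω) ∧ (∀ x ∈ Ω, G x = gradient u x) ∧
    ∀ x ∈ frontier Ω, (inner ℝ (G x) (‖gradient Φ x‖⁻¹ • gradient Φ x) : ℝ) = c

/-!
Away from the origin the gradient of `v x = z ‖x‖` is `z' ‖x‖ • ‖x‖⁻¹ • x`, and `z' 0 = 0`
makes it continuous at the origin, so `v` is `C¹` on the ball. In polar coordinates `x = r • ω`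
both sides of the weak formulation become integrals over the unit sphere of integrals over
`(0, R)` against `r ^ (n - 1) dr`. Along the ray through `ω` the flux integrand is `w r * ψ' r`
with `ψ r = φ (r • ω)`; since `w 0 = 0` and `ψ R = 0`, integrating by parts and using the ODE
turns it into `λ r ^ (n - 1) z r ^ (p - 1) ψ r`.
-/

open Filter Topology InnerProductSpace
open scoped RealInnerProductSpace Gradient

theorem continuous_abs_rpow_sub_two_mul_self {p : ℝ} (hp : 1 < p) :
    Continuous fun s : ℝ => |s| ^ (p - 2) * s := by
  refine continuous_iff_continuousAt.2 fun s => ?_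
  rcases eq_or_ne s 0 with rfl | hs
  · have hbound : ∀ t : ℝ, ‖|t| ^ (p - 2) * t‖ ≤ |t| ^ (p - 1) := by
      intro t
      rcases eq_or_ne t 0 with rfl | ht
      · simpa using Real.rpow_nonneg le_rfl _
      · rw [Real.norm_eq_abs, abs_mul, abs_of_nonneg (Real.rpow_nonneg (abs_nonneg t) _),
          ← Real.rpow_add_one (abs_ne_zero.2 ht), show p - 2 + 1 = p - 1 by ring]
    have hlim : Tendsto (fun t : ℝ => |t| ^ (p - 1)) (𝓝 0) (𝓝 0) := by
      have h := (continuous_abs.rpow_const fun _ => Or.inr (by linarith : 0 ≤ p - 1)).tendsto 0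
      rwa [abs_zero, Real.zero_rpow (by linarith)] at h
    simpa [ContinuousAt] using squeeze_zero_norm hbound hlim
  · exact ((Real.continuousAt_rpow_const _ _ (Or.inl (abs_ne_zero.2 hs))).comp
      continuous_abs.continuousAt).mul continuousAt_id

theorem continuousOn_comp_norm_closedBall {E : Type*} [SeminormedAddCommGroup E] {g : ℝ → ℝ}
    {R : ℝ} (hg : ContinuousOn g (Icc 0 R)) :
    ContinuousOn (fun x : E => g ‖x‖) (closedBall 0 R) :=
  hg.comp continuous_norm.continuousOn fun x hx => ⟨norm_nonneg x, mem_closedBall_zero_iff.1 hx⟩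

section Normed

variable {E : Type*} [NormedAddCommGroup E] [NormedSpace ℝ E]

theorem norm_smul_inv_norm_smul_le (c : ℝ) (x : E) : ‖c • ‖x‖⁻¹ • x‖ ≤ |c| := by
  rcases eq_or_ne x 0 with rfl | hx
  · simp
  · rw [norm_smul, norm_smul, norm_inv, norm_norm, inv_mul_cancel₀ (norm_ne_zero_iff.2 hx),
      mul_one, Real.norm_eq_abs]

theorem continuousOn_smul_inv_norm_smul {g' : ℝ → ℝ} {R : ℝ} (hg'c : ContinuousOn g' (Icc 0 R))
    (hg'0 : g' 0 = 0) : ContinuousOn (fun x : E => g' ‖x‖ • ‖x‖⁻¹ • x) (ball 0 R) := by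
  have hg'norm : ContinuousOn (fun x : E => g' ‖x‖) (ball 0 R) :=
    (continuousOn_comp_norm_closedBall hg'c).mono ball_subset_closedBall
  intro x hx
  rcases eq_or_ne x 0 with rfl | hx0
  · have hlim : Tendsto (fun y : E => |g' ‖y‖|) (𝓝[ball 0 R] 0) (𝓝 0) := by
      simpa [hg'0] using (hg'norm 0 hx).abs.tendsto
    simpa [ContinuousWithinAt] using
      squeeze_zero_norm (fun y => norm_smul_inv_norm_smul_le (g' ‖y‖) y) hlim
  · exact (hg'norm x hx).smul
      (((continuous_norm.continuousAt.inv₀ (norm_ne_zero_iff.2 hx0)).smul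
        continuousAt_id).continuousWithinAt)

end Normed

section InnerProductSpace

variable {E : Type*} [NormedAddCommGroup E] [InnerProductSpace ℝ E]

theorem abs_norm_rpow_mul_inner_le (p : ℝ) (g v : E) :
    |‖g‖ ^ (p - 2) * ⟪g, v⟫| ≤ ‖g‖ ^ (p - 1) * ‖v‖ := by
  rcases eq_or_ne g 0 with rfl | hg
  · simpa using mul_nonneg (Real.rpow_nonneg le_rfl _) (norm_nonneg v)
  · calc |‖g‖ ^ (p - 2) * ⟪g, v⟫| = ‖g‖ ^ (p - 2) * |⟪g, v⟫| := by
          rw [abs_mul, abs_of_nonneg (Real.rpow_nonneg (norm_nonneg g) _)]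
      _ ≤ ‖g‖ ^ (p - 2) * (‖g‖ * ‖v‖) := by
          gcongr; exact abs_real_inner_le_norm g v
      _ = ‖g‖ ^ (p - 1) * ‖v‖ := by
          rw [← mul_assoc, ← Real.rpow_add_one (norm_ne_zero_iff.2 hg),
            show p - 2 + 1 = p - 1 by ring]

theorem norm_smul_rpow_mul_inner_smul (p c : ℝ) {e : E} (he : ‖e‖ = 1) (v : E) :
    ‖c • e‖ ^ (p - 2) * ⟪c • e, v⟫ = |c| ^ (p - 2) * c * ⟪e, v⟫ := by
  rw [norm_smul, he, mul_one, real_inner_smul_left, Real.norm_eq_abs, mul_assoc]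

variable [CompleteSpace E]

theorem HasDerivAt.comp_hasGradientAt {f : E → ℝ} {f' x : E} {g : ℝ → ℝ}
    {g' : ℝ} (hg : HasDerivAt g g' (f x)) (hf : HasGradientAt f f' x) :
    HasGradientAt (g ∘ f) (g' • f') x := by
  rw [hasGradientAt_iff_hasFDerivAt, map_smul]
  exact hg.comp_hasFDerivAt x hf.hasFDerivAt

theorem hasGradientAt_norm {x : E} (hx : x ≠ 0) : HasGradientAt (‖·‖) (‖x‖⁻¹ • x) x := by
  have hsq : HasGradientAt (fun y : E => ‖y‖ ^ 2) ((2 : ℝ) • x) x := by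
    rw [hasGradientAt_iff_hasFDerivAt, map_smul]
    refine (hasStrictFDerivAt_norm_sq x).hasFDerivAt.congr_fderiv ?_
    ext y
    simp
  have hsqrt := HasDerivAt.comp_hasGradientAt (f := fun y : E => ‖y‖ ^ 2)
    (Real.hasDerivAt_sqrt (by positivity : ‖x‖ ^ 2 ≠ 0)) hsq
  simp only [Function.comp_def, Real.sqrt_sq (norm_nonneg _), smul_smul] at hsqrt
  convert hsqrt using 2
  field_simp

theorem contDiffOn_one_of_hasGradientAt {f : E → ℝ} {f' : E → E} {s : Set E} (hs : IsOpen s)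
    (hf : ∀ x ∈ s, HasGradientAt f (f' x) x) (hf' : ContinuousOn f' s) : ContDiffOn ℝ 1 f s := by
  rw [show (1 : WithTop ℕ∞) = 0 + 1 from rfl, contDiffOn_succ_iff_fderiv_of_isOpen hs]
  refine ⟨fun x hx => (hf x hx).differentiableAt.differentiableWithinAt, by simp, ?_⟩
  rw [contDiffOn_zero]
  exact ((toDual ℝ E).continuous.comp_continuousOn hf').congr fun x hx =>
    (hf x hx).hasFDerivAt.fderiv

theorem hasGradientAt_comp_norm_zero {g : ℝ → ℝ} (hg : HasDerivWithinAt g 0 (Ici 0) 0) :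
    HasGradientAt (fun y : E => g ‖y‖) 0 0 := by
  have hlittle : (fun t => g t - g 0) =o[𝓝[Ici 0] 0] fun t => t := by
    simpa using hasDerivWithinAt_iff_isLittleO.1 hg
  have hnorm : Tendsto (‖·‖) (𝓝 (0 : E)) (𝓝[Ici 0] 0) :=
    tendsto_nhdsWithin_iff.2 ⟨by simpa using (continuous_norm (E := E)).tendsto 0,
      Eventually.of_forall fun y => norm_nonneg y⟩
  rw [hasGradientAt_iff_isLittleO_nhds_zero]
  simpa [Function.comp_def] using
    (Asymptotics.isLittleO_norm_right (g' := fun y : E => y)).1 (hlittle.comp_tendsto hnorm)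

theorem hasGradientAt_comp_norm_of_mem_ball {g g' : ℝ → ℝ} {R : ℝ}
    (hg : ∀ t ∈ Icc 0 R, HasDerivWithinAt g (g' t) (Icc 0 R) t) (hg'0 : g' 0 = 0) {x : E}
    (hx : x ∈ ball 0 R) : HasGradientAt (fun y => g ‖y‖) (g' ‖x‖ • ‖x‖⁻¹ • x) x := by
  have hxR : ‖x‖ < R := mem_ball_zero_iff.1 hx
  rcases eq_or_ne x 0 with rfl | hx0
  · have hR : 0 < R := by simpa using hxR
    have hg0 := (hg 0 ⟨le_rfl, hR.le⟩).mono_of_mem_nhdsWithin (Icc_mem_nhdsGE hR)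
    rw [hg'0] at hg0
    simpa using hasGradientAt_comp_norm_zero hg0
  · have hr : 0 < ‖x‖ := norm_pos_iff.2 hx0
    exact ((hg ‖x‖ ⟨hr.le, hxR.le⟩).hasDerivAt (Icc_mem_nhds hr hxR)).comp_hasGradientAt
      (hasGradientAt_norm hx0)

end InnerProductSpace

section Polar

variable {E : Type*} [NormedAddCommGroup E] [NormedSpace ℝ E] [MeasurableSpace E] [BorelSpace E]
  [FiniteDimensional ℝ E] [Nontrivial E] (μ : Measure E) [μ.IsAddHaarMeasure]
  {F : Type*} [NormedAddCommGroup F] [NormedSpace ℝ F]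

theorem integral_volumeIoiPow (k : ℕ) (f : ℝ → F) :
    ∫ r, f r ∂(Measure.volumeIoiPow k) = ∫ r in Ioi (0 : ℝ), r ^ k • f r := by
  simp only [Measure.volumeIoiPow, ENNReal.ofReal]
  rw [integral_withDensity_eq_integral_smul (measurable_subtype_coe.pow_const k).real_toNNReal,
    integral_subtype_comap measurableSet_Ioi fun r => Real.toNNReal (r ^ k) • f r]
  refine setIntegral_congr_fun measurableSet_Ioi fun r hr => ?_
  rw [NNReal.smul_def, Real.coe_toNNReal _ (pow_nonneg (le_of_lt hr) k)]

theorem integral_eq_integral_sphere_integral_Ioi {f : E → F} (hf : Integrable f μ) :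
    ∫ x, f x ∂μ = ∫ ω : sphere (0 : E) 1,
      (∫ r in Ioi (0 : ℝ), r ^ (Module.finrank ℝ E - 1) • f (r • (ω : E))) ∂μ.toSphere := by
  have hpres := μ.measurePreserving_homeomorphUnitSphereProd
  have hemb := (homeomorphUnitSphereProd E).measurableEmbedding
  set f' : sphere (0 : E) 1 × Ioi (0 : ℝ) → F := fun q => f (q.2.1 • q.1.1)
  have hcomp : f' ∘ homeomorphUnitSphereProd E = fun x : ({0}ᶜ : Set E) => f x := by
    funext x
    simp [f', smul_smul, mul_inv_cancel₀ (norm_ne_zero_iff.2 x.2)]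
  have hint : Integrable f' (μ.toSphere.prod (Measure.volumeIoiPow (Module.finrank ℝ E - 1))) := by
    rw [← hpres.integrable_comp_emb hemb, hcomp]
    exact (integrableOn_iff_comap_subtypeVal (measurableSet_singleton 0).compl).1 hf.integrableOn
  calc ∫ x, f x ∂μ = ∫ x : ({0}ᶜ : Set E), f x ∂(μ.comap (↑)) := by
        rw [integral_subtype_comap (measurableSet_singleton _).compl, restrict_compl_singleton]
    _ = ∫ q, f' q ∂(μ.toSphere.prod (Measure.volumeIoiPow (Module.finrank ℝ E - 1))) := by
        rw [← hpres.integral_comp hemb, ← hcomp]; rfl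
    _ = _ := by
        rw [integral_prod f' hint]
        exact integral_congr_ae (Eventually.of_forall fun ω =>
          integral_volumeIoiPow _ fun r => f (r • (ω : E)))

theorem setIntegral_ball_eq_integral_sphere_integral_Ioo {f : E → F} {R : ℝ}
    (hf : IntegrableOn f (ball 0 R) μ) :
    ∫ x in ball 0 R, f x ∂μ = ∫ ω : sphere (0 : E) 1,
      (∫ r in Ioo 0 R, r ^ (Module.finrank ℝ E - 1) • f (r • (ω : E))) ∂μ.toSphere := by
  rw [← integral_indicator measurableSet_ball,
    integral_eq_integral_sphere_integral_Ioi μ (hf.integrable_indicator measurableSet_ball)]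
  refine integral_congr_ae (Eventually.of_forall fun ω => ?_)
  have hω : ‖(ω : E)‖ = 1 := mem_sphere_zero_iff_norm.1 ω.2
  have hind : EqOn (fun r : ℝ => r ^ (Module.finrank ℝ E - 1) • (ball 0 R).indicator f (r • ω))
      ((Iio R).indicator fun r => r ^ (Module.finrank ℝ E - 1) • f (r • ω)) (Ioi 0) := by
    intro r (hr : 0 < r)
    by_cases hrR : r < R <;> simp [hrR, norm_smul, hω, abs_of_pos hr]
  dsimp only
  rw [setIntegral_congr_fun measurableSet_Ioi hind, setIntegral_indicator measurableSet_Iio,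
    Ioi_inter_Iio]

end Polar

theorem integral_Ioo_mul_deriv_eq_of_hasDerivAt_neg {w f ψ ψ' : ℝ → ℝ} {R : ℝ} (hR : 0 ≤ R)
    (hw : ContinuousOn w (Icc 0 R)) (hw0 : w 0 = 0) (hwf : ∀ t ∈ Ioo 0 R, HasDerivAt w (-f t) t)
    (hf : ContinuousOn f (Icc 0 R)) (hψ : ∀ t, HasDerivAt ψ (ψ' t) t) (hψ' : Continuous ψ')
    (hψR : ψ R = 0) :
    ∫ t in Ioo 0 R, w t * ψ' t = ∫ t in Ioo 0 R, f t * ψ t := by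
  have hIcc : uIcc 0 R = Icc 0 R := uIcc_of_le hR
  have hparts := intervalIntegral.integral_mul_deriv_eq_deriv_mul_of_hasDerivAt (hIcc ▸ hw)
    (continuous_iff_continuousAt.2 fun t => (hψ t).continuousAt).continuousOn
    (by simpa [hR] using hwf) (fun t _ => hψ t)
    ((hIcc ▸ hf).neg.intervalIntegrable) (hψ'.intervalIntegrable 0 R)
  rw [← integral_Ioc_eq_integral_Ioo, ← integral_Ioc_eq_integral_Ioo,
    ← intervalIntegral.integral_of_le hR, ← intervalIntegral.integral_of_le hR, hparts, hw0, hψR]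
  simp [intervalIntegral.integral_neg]

theorem integral_Ioo_pow_smul_flux_comp_norm_eq {E : Type*} [NormedAddCommGroup E]
    [InnerProductSpace ℝ E] [CompleteSpace E] {k : ℕ} {p lam R : ℝ} {z z' : ℝ → ℝ} (hp : 1 < p)
    (hR : 0 ≤ R) (hz : ∀ t ∈ Icc 0 R, HasDerivWithinAt z (z' t) (Icc 0 R) t)
    (hz'c : ContinuousOn z' (Icc 0 R)) (hz'0 : z' 0 = 0)
    (hode : ∀ t ∈ Ioo 0 R, HasDerivAt (fun t => t ^ k * (|z' t| ^ (p - 2) * z' t))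
      (-(lam * t ^ k * z t ^ (p - 1))) t)
    {φ : E → ℝ} (hφ : ContDiff ℝ 1 φ) {ω : E} (hω : ‖ω‖ = 1) (hφR : φ (R • ω) = 0) :
    ∫ r in Ioo 0 R, r ^ k • (‖∇ (fun y => z ‖y‖) (r • ω)‖ ^ (p - 2) *
        ⟪∇ (fun y => z ‖y‖) (r • ω), ∇ φ (r • ω)⟫) =
      ∫ r in Ioo 0 R, r ^ k • (lam * z ‖r • ω‖ ^ (p - 1) * φ (r • ω)) := by
  have hnorm : ∀ r : ℝ, 0 ≤ r → ‖r • ω‖ = r := fun r hr => by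
    rw [norm_smul, hω, mul_one, Real.norm_of_nonneg hr]
  have hflux : EqOn (fun r : ℝ => r ^ k • (‖∇ (fun y => z ‖y‖) (r • ω)‖ ^ (p - 2) *
      ⟪∇ (fun y => z ‖y‖) (r • ω), ∇ φ (r • ω)⟫))
      (fun r => r ^ k * (|z' r| ^ (p - 2) * z' r) * fderiv ℝ φ (r • ω) ω) (Ioo 0 R) := by
    intro r ⟨hr0, hrR⟩
    have hmem : r • ω ∈ ball (0 : E) R := mem_ball_zero_iff.2 (by rwa [hnorm r hr0.le])
    have hgrad : ∇ (fun y => z ‖y‖) (r • ω) = z' r • ω := by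
      rw [(hasGradientAt_comp_norm_of_mem_ball hz hz'0 hmem).gradient, hnorm r hr0.le,
        inv_smul_smul₀ hr0.ne']
    dsimp only
    rw [hgrad, norm_smul_rpow_mul_inner_smul p _ hω, inner_gradient_right, conj_trivial,
      smul_eq_mul]
    ring
  have hsource : EqOn (fun r : ℝ => r ^ k • (lam * z ‖r • ω‖ ^ (p - 1) * φ (r • ω)))
      (fun r => lam * r ^ k * z r ^ (p - 1) * φ (r • ω)) (Ioo 0 R) := by
    intro r hr
    simp only [hnorm r hr.1.le, smul_eq_mul]
    ring
  have hzc : ContinuousOn z (Icc 0 R) := fun t ht => (hz t ht).continuousWithinAt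
  rw [setIntegral_congr_fun measurableSet_Ioo hflux,
    setIntegral_congr_fun measurableSet_Ioo hsource]
  refine integral_Ioo_mul_deriv_eq_of_hasDerivAt_neg hR ?_ (by simp [hz'0]) hode ?_ (fun r => ?_)
    ?_ (hφR)
  · exact (continuous_pow k).continuousOn.mul
      ((continuous_abs_rpow_sub_two_mul_self hp).comp_continuousOn hz'c)
  · exact (continuousOn_const.mul (continuous_pow k).continuousOn).mul
      (hzc.rpow_const fun _ _ => Or.inr (by linarith))
  · simpa [Function.comp_def] using
      ((hφ.differentiable one_ne_zero) (r • ω)).hasFDerivAt.comp_hasDerivAt r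
      ((hasDerivAt_id r).smul_const ω)
  · exact ((hφ.continuous_fderiv one_ne_zero).comp (continuous_id.smul continuous_const)).clm_apply
      continuous_const

theorem isWeakSolution_comp_norm {n : ℕ} (hn : 0 < n) {p lam R : ℝ} (hp : 1 < p) (hR : 0 < R)
    {z z' : ℝ → ℝ} (hz : ∀ t ∈ Icc 0 R, HasDerivWithinAt z (z' t) (Icc 0 R) t)
    (hz'c : ContinuousOn z' (Icc 0 R)) (hz'0 : z' 0 = 0)
    (hode : ∀ t ∈ Ioo 0 R, HasDerivAt (fun t => t ^ (n - 1) * (|z' t| ^ (p - 2) * z' t))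
      (-(lam * t ^ (n - 1) * z t ^ (p - 1))) t) :
    IsWeakSolution n p (ball 0 R) (fun t => lam * t ^ (p - 1)) (fun x : Euc n => z ‖x‖) := by
  have : Nontrivial (Euc n) :=
    Module.nontrivial_of_finrank_pos (R := ℝ) (by rwa [finrank_euclideanSpace_fin])
  have hgrad : ∀ x ∈ ball (0 : Euc n) R,
      HasGradientAt (fun y => z ‖y‖) (z' ‖x‖ • ‖x‖⁻¹ • x) x :=
    fun x hx => hasGradientAt_comp_norm_of_mem_ball hz hz'0 hx
  have hgradc : ContinuousOn (∇ fun y : Euc n => z ‖y‖) (ball 0 R) :=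
    (continuousOn_smul_inv_norm_smul hz'c hz'0).congr fun x hx => (hgrad x hx).gradient
  refine ⟨contDiffOn_one_of_hasGradientAt isOpen_ball hgrad
    (continuousOn_smul_inv_norm_smul hz'c hz'0), fun φ hφ _ hφsub => ?_⟩
  have hφ1 : ContDiff ℝ 1 φ := hφ.of_le (by exact_mod_cast le_top)
  have hgradφ : Continuous (∇ φ) :=
    (toDual ℝ (Euc n)).symm.continuous.comp (hφ1.continuous_fderiv one_ne_zero)
  obtain ⟨M, hM⟩ := isCompact_Icc.exists_bound_of_continuousOn hz'c
  obtain ⟨C, hC⟩ :=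
    (isCompact_closedBall (0 : Euc n) R).exists_bound_of_continuousOn hgradφ.continuousOn
  have hflux : IntegrableOn (fun x => ‖∇ (fun y : Euc n => z ‖y‖) x‖ ^ (p - 2) *
      ⟪∇ (fun y : Euc n => z ‖y‖) x, ∇ φ x⟫) (ball 0 R) := by
    have hmeas := hgradc.aemeasurable (μ := volume) measurableSet_ball
    refine IntegrableOn.of_bound measure_ball_lt_top
      ((hmeas.norm.pow_const _).mul (hmeas.inner hgradφ.aemeasurable)).aestronglyMeasurable
      (M ^ (p - 1) * C) (ae_restrict_of_forall_mem measurableSet_ball fun x hx => ?_)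
    have hMx : ‖∇ (fun y : Euc n => z ‖y‖) x‖ ≤ M := by
      rw [(hgrad x hx).gradient]
      exact (norm_smul_inv_norm_smul_le _ _).trans
        (hM _ ⟨norm_nonneg x, (mem_ball_zero_iff.1 hx).le⟩)
    calc _ ≤ ‖∇ (fun y : Euc n => z ‖y‖) x‖ ^ (p - 1) * ‖∇ φ x‖ :=
          abs_norm_rpow_mul_inner_le p _ _
      _ ≤ M ^ (p - 1) * C := by
          have hM0 : 0 ≤ M := (norm_nonneg _).trans (hM 0 ⟨le_rfl, hR.le⟩)
          exact mul_le_mul (Real.rpow_le_rpow (norm_nonneg _) hMx (by linarith))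
            (hC x (ball_subset_closedBall hx)) (norm_nonneg _) (Real.rpow_nonneg hM0 _)
  have hsource : IntegrableOn (fun x : Euc n => lam * z ‖x‖ ^ (p - 1) * φ x) (ball 0 R) := by
    refine (ContinuousOn.integrableOn_compact (isCompact_closedBall 0 R) ?_).mono_set
      ball_subset_closedBall
    exact (continuousOn_const.mul ((continuousOn_comp_norm_closedBall fun t ht =>
      (hz t ht).continuousWithinAt).rpow_const fun _ _ => Or.inr (by linarith))).mul
      hφ.continuous.continuousOn
  rw [setIntegral_ball_eq_integral_sphere_integral_Ioo volume hflux,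
    setIntegral_ball_eq_integral_sphere_integral_Ioo volume hsource]
  refine integral_congr_ae (Eventually.of_forall fun ω => ?_)
  have hω : ‖(ω : Euc n)‖ = 1 := mem_sphere_zero_iff_norm.1 ω.2
  have hφR : φ (R • (ω : Euc n)) = 0 := image_eq_zero_of_notMem_tsupport fun h => by
    simpa [norm_smul, hω, abs_of_pos hR] using hφsub h
  rw [finrank_euclideanSpace_fin]
  exact integral_Ioo_pow_smul_flux_comp_norm_eq hp hR.le hz hz'c hz'0 hode hφ1 hω hφR

theorem radial_eigenfunction_general (n : ℕ) (hn : 2 ≤ n) (p : ℝ) (hp : 1 < p)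
    (lam : ℝ) (R : ℝ) (hR : 0 < R)
    (z z' : ℝ → ℝ)
    (hz : ∀ t ∈ Icc (0 : ℝ) R, HasDerivWithinAt z (z' t) (Icc 0 R) t)
    (hz'c : ContinuousOn z' (Icc 0 R))
    (hzpos : ∀ t ∈ Ico (0 : ℝ) R, 0 < z t) (hzR : z R = 0) (hz'0 : z' 0 = 0)
    (w : ℝ → ℝ) (hw : w = fun t => t ^ (n - 1) * (|z' t| ^ (p - 2) * z' t))
    (hode : ∀ t ∈ Ioo (0 : ℝ) R, HasDerivAt w (-(lam * t ^ (n - 1) * z t ^ (p - 1))) t) :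
    (IsWeakSolution n p (ball 0 R) (fun t => lam * t ^ (p - 1)) (fun x : Euc n => z ‖x‖) ∧
      (∀ x ∈ ball (0 : Euc n) R, 0 < z ‖x‖) ∧
      ContinuousOn (fun x : Euc n => z ‖x‖) (closedBall 0 R) ∧
      (∀ x ∈ sphere (0 : Euc n) R, z ‖x‖ = 0)) ∧
    IsEigenRadius n p lam R := by
  subst hw
  have hweak := isWeakSolution_comp_norm (by omega) hp hR hz hz'c hz'0 hode
  have hpos : ∀ x ∈ ball (0 : Euc n) R, 0 < z ‖x‖ := fun x hx =>
    hzpos ‖x‖ ⟨norm_nonneg x, mem_ball_zero_iff.1 hx⟩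
  have hcont : ContinuousOn (fun x : Euc n => z ‖x‖) (closedBall 0 R) :=
    continuousOn_comp_norm_closedBall fun t ht => (hz t ht).continuousWithinAt
  have hsphere : ∀ x ∈ sphere (0 : Euc n) R, z ‖x‖ = 0 := fun x hx => by
    rw [mem_sphere_zero_iff_norm.1 hx, hzR]
  exact ⟨⟨hweak, hpos, hcont, hsphere⟩, hR, _, hweak, hpos, hcont, hsphere⟩

theorem radial_eigenfunction (n : ℕ) (hn : 2 ≤ n) (p : ℝ) (hp : 1 < p)
    (lam : ℝ) (hlam : 0 < lam) (R : ℝ) (hR : 0 < R)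
    (z z' : ℝ → ℝ)
    (hz : ∀ t ∈ Icc (0 : ℝ) R, HasDerivWithinAt z (z' t) (Icc 0 R) t)
    (hz'c : ContinuousOn z' (Icc 0 R))
    (hzpos : ∀ t ∈ Ico (0 : ℝ) R, 0 < z t) (hzR : z R = 0) (hz'0 : z' 0 = 0)
    (w : ℝ → ℝ) (hw : w = fun t => t ^ (n - 1) * (|z' t| ^ (p - 2) * z' t))
    (hode : ∀ t ∈ Ioo (0 : ℝ) R, HasDerivAt w (-(lam * t ^ (n - 1) * z t ^ (p - 1))) t) :
    (IsWeakSolution n p (ball 0 R) (fun t => lam * t ^ (p - 1)) (fun x : Euc n => z ‖x‖) ∧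
      (∀ x ∈ ball (0 : Euc n) R, 0 < z ‖x‖) ∧
      ContinuousOn (fun x : Euc n => z ‖x‖) (closedBall 0 R) ∧
      (∀ x ∈ sphere (0 : Euc n) R, z ‖x‖ = 0)) ∧
    IsEigenRadius n p lam R :=
  radial_eigenfunction_general n hn p hp lam R hR z z' hz hz'c hzpos hzR hz'0 w hw hode
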